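/- Let n ≥ 1, a > 1, and ξ_1, ..., ξ_n be i.i.d. real random variables with E[ξ] = 0, variance σ² > 0, and E[ξ⁴]/σ⁴ ≤ K. Let ξ̄_n be the sample mean and σ̂² := n^{-1}∑(ξ_i - ξ̄_n)² the empirical variance. Then for every x > 0: P(√n |ξ̄_n| > σ̂ x) ≤ 2(Φ(-x/√(a(1+x²/n))) + min(Δ_E, Δ_B)) + exp(-n(1-1/a)²/(2K)), where Δ_B and Δ_E are the Berry–Esseen and Edgeworth distances of √n ξ̄_n/σ to N(0,1). -/

import Mathlib

/-!
With `σ̂₀² = n⁻¹ ∑ ξᵢ²`, the empirical variance is `σ̂² = σ̂₀² - ξ̄²`, so `√n |ξ̄| > σ̂ x` is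
equivalent to `σ̂₀² x² < (n + x²) ξ̄²`. On the event `σ̂₀² > σ² / a` this forces the standardized
mean to satisfy `|√n ξ̄ / σ| > x / √(a (1 + x² / n))`, whose probability is controlled by the
distance of its c.d.f. to `Φ` (with or without the Edgeworth term, which is even in `x` and
cancels between the two tails). The complementary event `∑ ξᵢ² ≤ n σ² / a` is a lower deviation of
a sum of independent nonnegative variables, bounded by a Chernoff argument using only
`E ξ⁴ ≤ K σ⁴`.
-/

open MeasureTheory ProbabilityTheory

/-- The standard normal density. -/
noncomputable def gpdf (t : ℝ) : ℝ := (Real.sqrt (2 * Real.pi))⁻¹ * Real.exp (-(t ^ 2) / 2)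

/-- The standard normal c.d.f. `Φ`. -/
noncomputable def Phi (x : ℝ) : ℝ := ∫ t in Set.Iic x, gpdf t

open Real

lemma gpdf_eq_gaussianPDFReal : gpdf = gaussianPDFReal 0 1 := by
  ext t
  simp [gpdf, gaussianPDFReal]

lemma gpdf_nonneg (t : ℝ) : 0 ≤ gpdf t :=
  gpdf_eq_gaussianPDFReal ▸ gaussianPDFReal_nonneg 0 1 t

lemma gpdf_neg (t : ℝ) : gpdf (-t) = gpdf t := by
  simp [gpdf]

lemma integrable_gpdf : Integrable gpdf :=
  gpdf_eq_gaussianPDFReal ▸ integrable_gaussianPDFReal 0 1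

lemma integral_gpdf : ∫ t, gpdf t = 1 :=
  gpdf_eq_gaussianPDFReal ▸ integral_gaussianPDFReal_eq_one 0 one_ne_zero

lemma Phi_nonneg (x : ℝ) : 0 ≤ Phi x :=
  integral_nonneg gpdf_nonneg

lemma Phi_add_Phi_neg (x : ℝ) : Phi x + Phi (-x) = 1 := by
  have h : Phi (-x) = ∫ t in Set.Ioi x, gpdf t := by
    have h := integral_comp_neg_Iic (-x) gpdf
    simp only [gpdf_neg, neg_neg] at h
    exact h
  rw [h, Phi, intervalIntegral.integral_Iic_add_Ioi integrable_gpdf.integrableOn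
    integrable_gpdf.integrableOn, integral_gpdf]

lemma Phi_le_one (x : ℝ) : Phi x ≤ 1 := by
  linarith [Phi_add_Phi_neg x, Phi_nonneg (-x)]

lemma abs_one_sub_sq_mul_gpdf_le (x : ℝ) : |(1 - x ^ 2) * gpdf x| ≤ 2 := by
  have hexp : (1 + x ^ 2) * exp (-(x ^ 2) / 2) ≤ 2 := by
    rw [neg_div, exp_neg, ← div_eq_mul_inv, div_le_iff₀ (exp_pos _)]
    linarith [add_one_le_exp (x ^ 2 / 2)]
  have hconst : (√(2 * π))⁻¹ ≤ 1 :=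
    inv_le_one_of_one_le₀ (one_le_sqrt.2 (by linarith [pi_gt_three]))
  calc |(1 - x ^ 2) * gpdf x| ≤ (1 + x ^ 2) * gpdf x := by
        rw [abs_mul, abs_of_nonneg (gpdf_nonneg x)]
        exact mul_le_mul_of_nonneg_right
          (abs_le.2 ⟨by linarith [sq_nonneg x], by linarith [sq_nonneg x]⟩) (gpdf_nonneg x)
    _ ≤ (1 + x ^ 2) * exp (-(x ^ 2) / 2) := by
        gcongr
        exact mul_le_of_le_one_left (exp_pos _).le hconst
    _ ≤ 2 := hexp

section TailFromDistribution

variable {Ω : Type*} [MeasurableSpace Ω] {μ : Measure Ω} [IsProbabilityMeasure μ] {S : Ω → ℝ}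

lemma bddAbove_range_abs_cdf_sub {e : ℝ → ℝ} {C : ℝ} (he : ∀ x, |e x| ≤ C) :
    BddAbove (Set.range fun x => |μ.real {ω | S ω ≤ x} - Phi x - e x|) := by
  refine ⟨1 + C, ?_⟩
  rintro _ ⟨x, rfl⟩
  calc |μ.real {ω | S ω ≤ x} - Phi x - e x|
      ≤ |μ.real {ω | S ω ≤ x} - Phi x| + |e x| := abs_sub _ _
    _ ≤ 1 + C := add_le_add (abs_sub_le_of_nonneg_of_le measureReal_nonneg measureReal_le_one
        (Phi_nonneg x) (Phi_le_one x)) (he x)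

/-- The evenness of the correction `e` makes it cancel between the two tails. -/
lemma measureReal_lt_abs_le_of_abs_cdf_sub_le (hS : Measurable S) {e : ℝ → ℝ}
    (he : ∀ x, e (-x) = e x) {Δ : ℝ} (hΔ : ∀ x, |μ.real {ω | S ω ≤ x} - Phi x - e x| ≤ Δ)
    (y : ℝ) : μ.real {ω | y < |S ω|} ≤ 2 * (Phi (-y) + Δ) := by
  have hsub : {ω | y < |S ω|} ⊆ {ω | S ω ≤ y}ᶜ ∪ {ω | S ω ≤ -y} := by
    intro ω (hω : y < |S ω|)
    rcases lt_abs.1 hω with h | h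
    · exact Or.inl (not_le.2 h)
    · exact Or.inr (show S ω ≤ -y by linarith)
  have hcompl : μ.real {ω | S ω ≤ y}ᶜ = 1 - μ.real {ω | S ω ≤ y} := by
    rw [measureReal_compl (measurableSet_le hS measurable_const), probReal_univ]
  have hy := abs_le.1 (hΔ y)
  have hy' := abs_le.1 (hΔ (-y))
  rw [he] at hy'
  calc μ.real {ω | y < |S ω|} ≤ μ.real ({ω | S ω ≤ y}ᶜ ∪ {ω | S ω ≤ -y}) := measureReal_mono hsub
    _ ≤ μ.real {ω | S ω ≤ y}ᶜ + μ.real {ω | S ω ≤ -y} := measureReal_union_le _ _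
    _ ≤ 2 * (Phi (-y) + Δ) := by
        rw [hcompl]
        linarith [Phi_add_Phi_neg y]

lemma measureReal_lt_abs_le_Phi_add_min (hS : Measurable S) {c ΔB ΔE : ℝ}
    (hΔB : ΔB = ⨆ x : ℝ, |μ.real {ω | S ω ≤ x} - Phi x|)
    (hΔE : ΔE = ⨆ x : ℝ, |μ.real {ω | S ω ≤ x} - Phi x - c * (1 - x ^ 2) * gpdf x|) (y : ℝ) :
    μ.real {ω | y < |S ω|} ≤ 2 * (Phi (-y) + min ΔE ΔB) := by
  have hB : μ.real {ω | y < |S ω|} ≤ 2 * (Phi (-y) + ΔB) := by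
    refine measureReal_lt_abs_le_of_abs_cdf_sub_le hS (e := 0) (fun _ => rfl) (fun x => ?_) y
    simpa [hΔB] using le_ciSup (bddAbove_range_abs_cdf_sub (μ := μ) (S := S) (e := 0)
      (C := 0) (by simp)) x
  have hE : μ.real {ω | y < |S ω|} ≤ 2 * (Phi (-y) + ΔE) := by
    refine measureReal_lt_abs_le_of_abs_cdf_sub_le hS (e := fun x => c * (1 - x ^ 2) * gpdf x)
      (fun x => by simp [gpdf_neg]) (fun x => hΔE ▸ le_ciSup ?_ x) y
    refine bddAbove_range_abs_cdf_sub (C := |c| * 2) fun x => ?_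
    rw [mul_assoc, abs_mul]
    gcongr
    exact abs_one_sub_sq_mul_gpdf_le x
  rcases min_cases ΔE ΔB with ⟨h, -⟩ | ⟨h, -⟩ <;> rwa [h]

end TailFromDistribution

lemma exp_neg_le_quadratic_of_nonneg {u : ℝ} (hu : 0 ≤ u) : exp (-u) ≤ 1 - u + u ^ 2 / 2 := by
  have hderiv : ∀ v : ℝ, HasDerivAt (fun v => 1 - v + v ^ 2 / 2 - exp (-v))
      (-1 + v + exp (-v)) v := fun v =>
    ((((hasDerivAt_id' v).const_sub 1).fun_add ((hasDerivAt_pow 2 v).div_const 2)).fun_sub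
      (hasDerivAt_neg' v).exp).congr_deriv (by ring)
  have hmono : Monotone fun v => 1 - v + v ^ 2 / 2 - exp (-v) :=
    monotone_of_deriv_nonneg (fun v => (hderiv v).differentiableAt) fun v => by
      rw [(hderiv v).deriv]
      linarith [add_one_le_exp (-v)]
  have := hmono hu
  simp only [neg_zero, exp_zero] at this
  linarith

section LowerTail

variable {Ω : Type*} [MeasurableSpace Ω] {μ : Measure Ω} [IsProbabilityMeasure μ]

lemma integrable_exp_neg_mul_of_nonneg {X : Ω → ℝ} (hX : AEMeasurable X μ) (h0 : ∀ ω, 0 ≤ X ω)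
    {l : ℝ} (hl : 0 ≤ l) : Integrable (fun ω => exp (-l * X ω)) μ :=
  Integrable.of_bound (hX.const_mul _).exp.aestronglyMeasurable 1 <| ae_of_all _ fun ω => by
    rw [Real.norm_of_nonneg (exp_pos _).le, exp_le_one_iff]
    nlinarith [mul_nonneg hl (h0 ω)]

lemma mgf_neg_le_of_nonneg {X : Ω → ℝ} (hX : AEMeasurable X μ) (h0 : ∀ ω, 0 ≤ X ω)
    (hX2 : Integrable (fun ω => X ω ^ 2) μ) {l : ℝ} (hl : 0 ≤ l) :
    mgf X μ (-l) ≤ exp (-l * ∫ ω, X ω ∂μ + l ^ 2 * (∫ ω, X ω ^ 2 ∂μ) / 2) := by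
  have hX1 : Integrable X μ :=
    ((memLp_two_iff_integrable_sq hX.aestronglyMeasurable).2 hX2).integrable one_le_two
  have hlin : Integrable (fun ω => 1 - l * X ω) μ := (integrable_const 1).sub (hX1.const_mul l)
  have hquad : Integrable (fun ω => l ^ 2 * X ω ^ 2 / 2) μ := (hX2.const_mul _).div_const 2
  calc mgf X μ (-l) ≤ ∫ ω, (1 - l * X ω + l ^ 2 * X ω ^ 2 / 2) ∂μ := by
        refine integral_mono (integrable_exp_neg_mul_of_nonneg hX h0 hl) (hlin.add hquad)
          fun ω => ?_
        have := exp_neg_le_quadratic_of_nonneg (mul_nonneg hl (h0 ω))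
        rw [neg_mul]
        linarith [mul_pow l (X ω) 2]
    _ = (-l * ∫ ω, X ω ∂μ + l ^ 2 * (∫ ω, X ω ^ 2 ∂μ) / 2) + 1 := by
        rw [integral_add hlin hquad, integral_sub (integrable_const 1) (hX1.const_mul l),
          integral_div, integral_const_mul, integral_const_mul]
        simp
        ring
    _ ≤ exp (-l * ∫ ω, X ω ∂μ + l ^ 2 * (∫ ω, X ω ^ 2 ∂μ) / 2) := add_one_le_exp _

/-- Only second moments enter, since `exp (-u) ≤ 1 - u + u² / 2` for `u ≥ 0`. -/
theorem measureReal_sum_le_le_exp {ι : Type*} [Fintype ι] {η : ι → Ω → ℝ}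
    (hmeas : ∀ i, Measurable (η i)) (hindep : iIndepFun η μ) (h0 : ∀ i ω, 0 ≤ η i ω)
    (hint : ∀ i, Integrable (fun ω => η i ω ^ 2) μ) {m M t : ℝ}
    (hm : ∀ i, m ≤ ∫ ω, η i ω ∂μ) (hM : ∀ i, ∫ ω, η i ω ^ 2 ∂μ ≤ M) (ht : 0 ≤ t) :
    μ.real {ω | ∑ i, η i ω ≤ Fintype.card ι * (m - t)}
      ≤ exp (-(Fintype.card ι * t ^ 2) / (2 * M)) := by
  rcases le_or_gt M 0 with hM0 | hM0
  -- for `M ≤ 0` the right-hand side is at least `1`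
  · exact measureReal_le_one.trans <| one_le_exp <|
      div_nonneg_of_nonpos (neg_nonpos.2 (by positivity)) (by linarith)
  set n : ℝ := (Fintype.card ι : ℝ)
  -- the optimal Chernoff parameter for the quadratic bound on the moment generating function
  set l := t / M with hl_def
  have hl : 0 ≤ l := div_nonneg ht hM0.le
  have hsum : Measurable (∑ i, η i) := by
    rw [Finset.sum_fn]
    exact Finset.measurable_sum _ fun i _ => hmeas i
  have hsum0 : ∀ ω, 0 ≤ (∑ i, η i) ω := fun ω => by
    simpa only [Finset.sum_apply] using Finset.sum_nonneg fun i _ => h0 i ω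
  have hmgf : mgf (∑ i, η i) μ (-l) ≤ exp (n * (-l * m + l ^ 2 * M / 2)) := by
    rw [hindep.mgf_sum hmeas, show n * (-l * m + l ^ 2 * M / 2)
      = ∑ _i : ι, (-l * m + l ^ 2 * M / 2) by rw [Finset.sum_const, Finset.card_univ,
        nsmul_eq_mul], exp_sum]
    refine Finset.prod_le_prod (fun i _ => mgf_nonneg) fun i _ => ?_
    refine (mgf_neg_le_of_nonneg (hmeas i).aemeasurable (h0 i) (hint i) hl).trans ?_
    refine exp_le_exp.2 ?_
    linarith [mul_nonneg hl (sub_nonneg.2 (hm i)), mul_nonneg (sq_nonneg l) (sub_nonneg.2 (hM i))]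
  calc μ.real {ω | ∑ i, η i ω ≤ n * (m - t)}
      = μ.real {ω | (∑ i, η i) ω ≤ n * (m - t)} := by simp only [Finset.sum_apply]
    _ ≤ exp (-(-l) * (n * (m - t))) * mgf (∑ i, η i) μ (-l) :=
        measure_le_le_exp_mul_mgf _ (neg_nonpos.2 hl)
          (integrable_exp_neg_mul_of_nonneg hsum.aemeasurable hsum0 hl)
    _ ≤ exp (l * (n * (m - t))) * exp (n * (-l * m + l ^ 2 * M / 2)) := by
        rw [neg_neg]
        gcongr
    _ = exp (-(n * t ^ 2) / (2 * M)) := by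
        rw [← exp_add, hl_def]
        congr 1
        field_simp
        ring

lemma measureReal_sum_sq_le_le_exp {ι : Type*} [Fintype ι] {ξ : ι → Ω → ℝ} {ξ₀ : Ω → ℝ}
    (hmeas : ∀ i, Measurable (ξ i)) (hindep : iIndepFun ξ μ)
    (hid : ∀ i, IdentDistrib (ξ i) ξ₀ μ μ) (hint4 : Integrable (fun ω => ξ₀ ω ^ 4) μ)
    {σ K a : ℝ} (hσpos : 0 < σ) (hσ : σ ^ 2 = ∫ ω, ξ₀ ω ^ 2 ∂μ)
    (hkurt : (∫ ω, ξ₀ ω ^ 4 ∂μ) / σ ^ 4 ≤ K) (ha : 1 ≤ a) :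
    μ.real {ω | ∑ i, ξ i ω ^ 2 ≤ Fintype.card ι * σ ^ 2 / a}
      ≤ exp (-(Fintype.card ι * (1 - 1 / a) ^ 2) / (2 * K)) := by
  have hsq (i : ι) : IdentDistrib (fun ω => ξ i ω ^ 2) (fun ω => ξ₀ ω ^ 2) μ μ :=
    (hid i).comp (measurable_id.pow_const 2)
  have hfourth (i : ι) :
      IdentDistrib (fun ω => (ξ i ω ^ 2) ^ 2) (fun ω => (ξ₀ ω ^ 2) ^ 2) μ μ :=
    (hsq i).comp (measurable_id.pow_const 2)
  have hint4' : Integrable (fun ω => (ξ₀ ω ^ 2) ^ 2) μ := by simpa only [← pow_mul] using hint4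
  have hkurt' : ∫ ω, (ξ₀ ω ^ 2) ^ 2 ∂μ ≤ K * σ ^ 4 := by
    simpa only [← pow_mul, div_le_iff₀ (by positivity : (0 : ℝ) < σ ^ 4)] using hkurt
  have h := measureReal_sum_le_le_exp (μ := μ) (η := fun i ω => ξ i ω ^ 2)
    (fun i => (hmeas i).pow_const 2) (hindep.comp _ fun _ => measurable_id.pow_const 2)
    (fun i ω => sq_nonneg _) (fun i => (hfourth i).integrable_iff.2 hint4')
    (m := σ ^ 2) (M := K * σ ^ 4) (fun i => ((hsq i).integral_eq.trans hσ.symm).ge)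
    (fun i => ((hfourth i).integral_eq).trans_le hkurt')
    (t := σ ^ 2 * (1 - 1 / a))
    (mul_nonneg (sq_nonneg σ) (sub_nonneg.2 ((div_le_one (by linarith)).2 ha)))
  rwa [show (Fintype.card ι : ℝ) * (σ ^ 2 - σ ^ 2 * (1 - 1 / a))
      = Fintype.card ι * σ ^ 2 / a by ring,
    show -(Fintype.card ι * (σ ^ 2 * (1 - 1 / a)) ^ 2) / (2 * (K * σ ^ 4))
      = -(Fintype.card ι * (1 - 1 / a) ^ 2) * σ ^ 4 / (2 * K * σ ^ 4) by ring,
    mul_div_mul_right _ _ (by positivity)] at h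

end LowerTail

lemma sum_sub_mean_sq_div {n : ℕ} (v : Fin n → ℝ) :
    (∑ i, (v i - (∑ j, v j) / n) ^ 2) / n = (∑ i, v i ^ 2) / n - ((∑ j, v j) / n) ^ 2 := by
  rcases n.eq_zero_or_pos with rfl | hn
  · simp
  have hn' : (n : ℝ) ≠ 0 := by positivity
  simp only [sub_sq, Finset.sum_add_distrib, Finset.sum_sub_distrib, ← Finset.mul_sum,
    ← Finset.sum_mul, Finset.sum_const, Finset.card_univ, Fintype.card_fin, nsmul_eq_mul]
  field_simp
  ring

/-- With `A` the mean square and `b` the mean of a sample of size `n`, `A - b²` is the empirical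
variance, and `√n b / σ` the standardized mean. -/
lemma div_sqrt_lt_abs_of_sqrt_sub_sq_mul_lt {n x a σ A b : ℝ} (hx : 0 ≤ x) (ha : 0 < a)
    (hσ : σ ≠ 0) (hA : σ ^ 2 / a < A) (h : √(A - b ^ 2) * x < √n * |b|) :
    x / √(a * (1 + x ^ 2 / n)) < |√n * b / σ| := by
  have hn : 0 < n :=
    sqrt_pos.1 (pos_of_mul_pos_left ((by positivity : 0 ≤ √(A - b ^ 2) * x).trans_lt h)
      (abs_nonneg b))
  have hsq : (A - b ^ 2) * x ^ 2 < n * b ^ 2 := by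
    have h2 := pow_lt_pow_left₀ h (by positivity) two_ne_zero
    rw [mul_pow, mul_pow, sq_sqrt', sq_sqrt hn.le, sq_abs] at h2
    nlinarith [le_max_left (A - b ^ 2) 0, sq_nonneg x]
  have hσA : σ ^ 2 < a * A := by rwa [div_lt_iff₀ ha, mul_comm] at hA
  have hD : 0 < a * (1 + x ^ 2 / n) := by positivity
  rw [div_lt_iff₀ (sqrt_pos.2 hD)]
  refine lt_of_pow_lt_pow_left₀ 2 (by positivity) ?_
  rw [mul_pow, sq_sqrt hD.le, sq_abs, div_pow, mul_pow, sq_sqrt hn.le, div_mul_eq_mul_div,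
    lt_div_iff₀ (by positivity),
    show n * b ^ 2 * (a * (1 + x ^ 2 / n)) = a * ((n + x ^ 2) * b ^ 2) by field_simp]
  nlinarith [mul_le_mul_of_nonneg_left hσA.le (sq_nonneg x)]

lemma div_sqrt_lt_abs_mean_of_sqrt_var_mul_lt {n : ℕ} (v : Fin n → ℝ) {x a σ : ℝ} (hx : 0 ≤ x)
    (ha : 0 < a) (hσ : σ ≠ 0) (hv : n * σ ^ 2 / a < ∑ i, v i ^ 2)
    (h : √((∑ i, (v i - (∑ j, v j) / n) ^ 2) / n) * x < √n * |(∑ i, v i) / n|) :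
    x / √(a * (1 + x ^ 2 / n)) < |√n * ((∑ i, v i) / n) / σ| := by
  rcases n.eq_zero_or_pos with rfl | hn
  · simp at hv
  rw [sum_sub_mean_sq_div] at h
  refine div_sqrt_lt_abs_of_sqrt_sub_sq_mul_lt hx ha hσ ?_ h
  rw [lt_div_iff₀ (by positivity)]
  linarith [show σ ^ 2 / a * n = n * σ ^ 2 / a by ring]

theorem stmt_14_general {Ω : Type*} [MeasurableSpace Ω] (μ : Measure Ω) [IsProbabilityMeasure μ]
    (n : ℕ) (a K : ℝ) (ha : 1 < a)
    (ξ : Fin n → Ω → ℝ) (ξ₀ : Ω → ℝ)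
    (hmeas : ∀ i, Measurable (ξ i))
    (hindep : iIndepFun ξ μ)
    (hid : ∀ i, IdentDistrib (ξ i) ξ₀ μ μ)
    (hint4 : Integrable (fun ω => ξ₀ ω ^ 4) μ)
    (σ : ℝ) (hσpos : 0 < σ) (hσ : σ ^ 2 = ∫ ω, ξ₀ ω ^ 2 ∂μ)
    (hkurt : (∫ ω, ξ₀ ω ^ 4 ∂μ) / σ ^ 4 ≤ K)
    (S : Ω → ℝ) (hS : S = fun ω => Real.sqrt n * ((∑ i, ξ i ω) / n) / σ)
    (lam3 ΔB ΔE : ℝ)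
    (hΔB : ΔB = ⨆ x : ℝ, |(μ {ω | S ω ≤ x}).toReal - Phi x|)
    (hΔE : ΔE = ⨆ x : ℝ,
      |(μ {ω | S ω ≤ x}).toReal - Phi x - lam3 / (6 * Real.sqrt n) * (1 - x ^ 2) * gpdf x|) :
    ∀ x : ℝ, 0 < x →
      (μ {ω | Real.sqrt ((∑ i, (ξ i ω - (∑ j, ξ j ω) / n) ^ 2) / n) * x
            < Real.sqrt n * |(∑ i, ξ i ω) / n|}).toReal
        ≤ 2 * (Phi (-(x / Real.sqrt (a * (1 + x ^ 2 / n)))) + min ΔE ΔB)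
          + Real.exp (-(n * (1 - 1 / a) ^ 2) / (2 * K)) := by
  intro x hx
  have hsub : {ω | √((∑ i, (ξ i ω - (∑ j, ξ j ω) / n) ^ 2) / n) * x < √n * |(∑ i, ξ i ω) / n|}
      ⊆ {ω | x / √(a * (1 + x ^ 2 / n)) < |S ω|} ∪ {ω | ∑ i, ξ i ω ^ 2 ≤ n * σ ^ 2 / a} := by
    intro ω hω
    by_cases hsmall : ∑ i, ξ i ω ^ 2 ≤ n * σ ^ 2 / a
    · exact Or.inr hsmall
    refine Or.inl ?_
    show _ < |S ω|
    rw [hS]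
    exact div_sqrt_lt_abs_mean_of_sqrt_var_mul_lt (fun i => ξ i ω) hx.le (by linarith)
      hσpos.ne' (not_le.1 hsmall) hω
  have hchernoff := measureReal_sum_sq_le_le_exp hmeas hindep hid hint4 hσpos hσ hkurt ha.le
  rw [Fintype.card_fin] at hchernoff
  exact (measureReal_mono hsub).trans <| (measureReal_union_le _ _).trans <|
    add_le_add (measureReal_lt_abs_le_Phi_add_min (hS ▸ by fun_prop) hΔB hΔE _) hchernoff

/-- Studentized tail bound (empirical variance estimator `σ̂`): for i.i.d. centered
`ξᵢ` with kurtosis bounded by `K`, for every `x > 0` and `a > 1`,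
`P(√n |ξ̄_n| > σ̂ x) ≤ 2(Φ(-x/√(a(1+x²/n))) + min(Δ_E, Δ_B)) + exp(-n(1-1/a)²/(2K))`. -/
theorem stmt_14 {Ω : Type*} [MeasurableSpace Ω] (μ : Measure Ω) [IsProbabilityMeasure μ]
    (n : ℕ) (hn : 1 ≤ n) (a K : ℝ) (ha : 1 < a)
    (ξ : Fin n → Ω → ℝ) (ξ₀ : Ω → ℝ)
    (hmeas : ∀ i, Measurable (ξ i)) (hmeas₀ : Measurable ξ₀)
    (hindep : iIndepFun ξ μ)
    (hid : ∀ i, IdentDistrib (ξ i) ξ₀ μ μ)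
    (hint4 : Integrable (fun ω => ξ₀ ω ^ 4) μ)
    (hmean : ∫ ω, ξ₀ ω ∂μ = 0)
    (σ : ℝ) (hσpos : 0 < σ) (hσ : σ ^ 2 = ∫ ω, ξ₀ ω ^ 2 ∂μ)
    (hkurt : (∫ ω, ξ₀ ω ^ 4 ∂μ) / σ ^ 4 ≤ K)
    (S : Ω → ℝ) (hS : S = fun ω => Real.sqrt n * ((∑ i, ξ i ω) / n) / σ)
    (lam3 ΔB ΔE : ℝ)
    (hlam3 : lam3 = (∫ ω, ξ₀ ω ^ 3 ∂μ) / σ ^ 3)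
    (hΔB : ΔB = ⨆ x : ℝ, |(μ {ω | S ω ≤ x}).toReal - Phi x|)
    (hΔE : ΔE = ⨆ x : ℝ,
      |(μ {ω | S ω ≤ x}).toReal - Phi x - lam3 / (6 * Real.sqrt n) * (1 - x ^ 2) * gpdf x|) :
    ∀ x : ℝ, 0 < x →
      (μ {ω | Real.sqrt ((∑ i, (ξ i ω - (∑ j, ξ j ω) / n) ^ 2) / n) * x
            < Real.sqrt n * |(∑ i, ξ i ω) / n|}).toReal
        ≤ 2 * (Phi (-(x / Real.sqrt (a * (1 + x ^ 2 / n)))) + min ΔE ΔB)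
          + Real.exp (-(n * (1 - 1 / a) ^ 2) / (2 * K)) :=
  stmt_14_general μ n a K ha ξ ξ₀ hmeas hindep hid hint4 σ hσpos hσ hkurt S hS lam3 ΔB ΔE hΔB hΔE
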